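/- arXiv:1810.11991 — 9 statements merged into one kernel-verified Lean document; each statement's English description precedes it below -/
import Mathlib

section
/- Let f(x) = a₄x⁴ + a₃x³ + a₂x² + a₁x + a₀ and let (x₁,y₁), (x₂,y₂) be points with y₁² = f(x₁), y₂² = f(x₂), x₁ ≠ x₂. Define C = ((y₁−y₂)/(x₁−x₂))² − a₄(x₁+x₂)² − a₃(x₁+x₂). Then along any smooth motion t ↦ (x₁(t), y₁(t)), (x₂(t), y₂(t)) on the curve satisfying the differential relation x₁'/y₁ + x₂'/y₂ = 0 (with y₁, y₂ ≠ 0), the quantity C is constant, i.e. dC/dt = 0. -/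
/-!
Along the motion, `x₁' = k y₁` and `x₂' = -k y₂` for `k = x₁'/y₁`, and differentiating the curve
equation gives `y₁' = k f'(x₁)/2`, `y₂' = -k f'(x₂)/2`. With `s = (y₁ - y₂)/(x₁ - x₂)` and
`y₁² - y₂² = f(x₁) - f(x₂)`, the derivative of `s` is governed by the defect of the trapezoid rule,
`(f'(u) + f'(v))(u - v) - 2(f(u) - f(v))`, which for a quartic equals `(u - v)³ (2a₄(u + v) + a₃)`.
This makes `(s²)' = k (y₁ - y₂)(2a₄(x₁ + x₂) + a₃)`, which is exactly the derivative of
`a₄(x₁ + x₂)² + a₃(x₁ + x₂)`.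
-/

def quartic (a₀ a₁ a₂ a₃ a₄ x : ℝ) : ℝ :=
  a₄ * x ^ 4 + a₃ * x ^ 3 + a₂ * x ^ 2 + a₁ * x + a₀

def quarticDeriv (a₁ a₂ a₃ a₄ x : ℝ) : ℝ :=
  4 * a₄ * x ^ 3 + 3 * a₃ * x ^ 2 + 2 * a₂ * x + a₁

theorem hasDerivAt_quartic (a₀ a₁ a₂ a₃ a₄ x : ℝ) :
    HasDerivAt (quartic a₀ a₁ a₂ a₃ a₄) (quarticDeriv a₁ a₂ a₃ a₄ x) x := by
  have h := (((((hasDerivAt_pow 4 x).const_mul a₄).add ((hasDerivAt_pow 3 x).const_mul a₃)).add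
    ((hasDerivAt_pow 2 x).const_mul a₂)).add ((hasDerivAt_id x).const_mul a₁)).add_const a₀
  refine h.congr_deriv ?_
  simp only [quarticDeriv]
  norm_num
  ring

theorem quartic_trapezoid_defect (a₀ a₁ a₂ a₃ a₄ u v : ℝ) :
    (quarticDeriv a₁ a₂ a₃ a₄ u + quarticDeriv a₁ a₂ a₃ a₄ v) * (u - v)
      - 2 * (quartic a₀ a₁ a₂ a₃ a₄ u - quartic a₀ a₁ a₂ a₃ a₄ v)
      = (u - v) ^ 3 * (2 * a₄ * (u + v) + a₃) := by
  simp only [quartic, quarticDeriv]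
  ring

theorem two_mul_mul_eq_of_sq_eq_comp {f x y : ℝ → ℝ} {f' x' y' t : ℝ}
    (hc : ∀ s, y s ^ 2 = f (x s)) (hx : HasDerivAt x x' t) (hy : HasDerivAt y y' t)
    (hf : HasDerivAt f f' (x t)) :
    2 * y t * y' = f' * x' := by
  have hsq : HasDerivAt (fun s => y s ^ 2) (2 * y t * y') t := by
    refine (hy.pow 2).congr_deriv ?_
    norm_num
  rw [funext hc] at hsq
  exact hsq.unique (hf.comp t hx)

noncomputable def eulerInvariant (a₃ a₄ u v p q : ℝ) : ℝ :=
  ((p - q) / (u - v)) ^ 2 - a₄ * (u + v) ^ 2 - a₃ * (u + v)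

theorem hasDerivAt_eulerInvariant (a₃ a₄ : ℝ) {x₁ x₂ y₁ y₂ : ℝ → ℝ} {u' v' p' q' t : ℝ}
    (hx₁ : HasDerivAt x₁ u' t) (hx₂ : HasDerivAt x₂ v' t)
    (hy₁ : HasDerivAt y₁ p' t) (hy₂ : HasDerivAt y₂ q' t) (hne : x₁ t ≠ x₂ t) :
    HasDerivAt (fun s => eulerInvariant a₃ a₄ (x₁ s) (x₂ s) (y₁ s) (y₂ s))
      (2 * ((y₁ t - y₂ t) / (x₁ t - x₂ t))
          * (((p' - q') * (x₁ t - x₂ t) - (y₁ t - y₂ t) * (u' - v')) / (x₁ t - x₂ t) ^ 2)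
        - (2 * a₄ * (x₁ t + x₂ t) + a₃) * (u' + v')) t := by
  have h := ((((hy₁.sub hy₂).div (hx₁.sub hx₂) (sub_ne_zero.mpr hne)).pow 2).sub
    (((hx₁.add hx₂).pow 2).const_mul a₄)).sub ((hx₁.add hx₂).const_mul a₃)
  refine h.congr_deriv ?_
  simp only [Pi.sub_apply, Pi.add_apply, Pi.div_apply]
  ring

theorem eulerInvariant_deriv_eq_zero {a₀ a₁ a₂ a₃ a₄ u v p q u' v' p' q' : ℝ}
    (hp : p ≠ 0) (hq : q ≠ 0) (huv : u ≠ v)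
    (hcu : p ^ 2 = quartic a₀ a₁ a₂ a₃ a₄ u) (hcv : q ^ 2 = quartic a₀ a₁ a₂ a₃ a₄ v)
    (hp' : 2 * p * p' = quarticDeriv a₁ a₂ a₃ a₄ u * u')
    (hq' : 2 * q * q' = quarticDeriv a₁ a₂ a₃ a₄ v * v')
    (hrel : u' / p + v' / q = 0) :
    2 * ((p - q) / (u - v)) * (((p' - q') * (u - v) - (p - q) * (u' - v')) / (u - v) ^ 2)
      - (2 * a₄ * (u + v) + a₃) * (u' + v') = 0 := by
  obtain ⟨k, rfl⟩ : ∃ k, u' = k * p := ⟨u' / p, by field_simp⟩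
  obtain rfl : v' = -k * q := by
    field_simp at hrel
    linear_combination hrel
  obtain rfl : p' = k * quarticDeriv a₁ a₂ a₃ a₄ u / 2 := by
    apply mul_left_cancel₀ (mul_ne_zero two_ne_zero hp)
    linear_combination hp'
  obtain rfl : q' = -k * quarticDeriv a₁ a₂ a₃ a₄ v / 2 := by
    apply mul_left_cancel₀ (mul_ne_zero two_ne_zero hq)
    linear_combination hq'
  have hdefect := quartic_trapezoid_defect a₀ a₁ a₂ a₃ a₄ u v
  rw [← hcu, ← hcv] at hdefect
  have hnum : (k * quarticDeriv a₁ a₂ a₃ a₄ u / 2 - -k * quarticDeriv a₁ a₂ a₃ a₄ v / 2) * (u - v)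
      - (p - q) * (k * p - -k * q) = k / 2 * (u - v) ^ 3 * (2 * a₄ * (u + v) + a₃) := by
    linear_combination k / 2 * hdefect
  have huv' : u - v ≠ 0 := sub_ne_zero.mpr huv
  rw [hnum]
  field_simp
  ring

/-- Euler's algebraic integral `C` is constant along any smooth motion of two
points on the quartic curve `y² = f(x)` satisfying `x₁'/y₁ + x₂'/y₂ = 0`. -/
theorem stmt_0 (a₀ a₁ a₂ a₃ a₄ : ℝ)
    (x₁ x₂ y₁ y₂ : ℝ → ℝ)
    (hx₁ : Differentiable ℝ x₁) (hx₂ : Differentiable ℝ x₂)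
    (hy₁ : Differentiable ℝ y₁) (hy₂ : Differentiable ℝ y₂)
    (hc₁ : ∀ t, (y₁ t) ^ 2 =
      a₄ * (x₁ t) ^ 4 + a₃ * (x₁ t) ^ 3 + a₂ * (x₁ t) ^ 2 + a₁ * x₁ t + a₀)
    (hc₂ : ∀ t, (y₂ t) ^ 2 =
      a₄ * (x₂ t) ^ 4 + a₃ * (x₂ t) ^ 3 + a₂ * (x₂ t) ^ 2 + a₁ * x₂ t + a₀)
    (hy₁0 : ∀ t, y₁ t ≠ 0) (hy₂0 : ∀ t, y₂ t ≠ 0)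
    (hne : ∀ t, x₁ t ≠ x₂ t)
    (hrel : ∀ t, deriv x₁ t / y₁ t + deriv x₂ t / y₂ t = 0) :
    ∀ t, deriv (fun t =>
      ((y₁ t - y₂ t) / (x₁ t - x₂ t)) ^ 2
        - a₄ * (x₁ t + x₂ t) ^ 2 - a₃ * (x₁ t + x₂ t)) t = 0 := by
  intro t
  have hX₁ := (hx₁ t).hasDerivAt
  have hX₂ := (hx₂ t).hasDerivAt
  have hY₁ := (hy₁ t).hasDerivAt
  have hY₂ := (hy₂ t).hasDerivAt
  refine (hasDerivAt_eulerInvariant a₃ a₄ hX₁ hX₂ hY₁ hY₂ (hne t)).deriv.trans ?_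
  exact eulerInvariant_deriv_eq_zero (hy₁0 t) (hy₂0 t) (hne t) (hc₁ t) (hc₂ t)
    (two_mul_mul_eq_of_sq_eq_comp hc₁ hX₁ hY₁ (hasDerivAt_quartic a₀ a₁ a₂ a₃ a₄ _))
    (two_mul_mul_eq_of_sq_eq_comp hc₂ hX₂ hY₂ (hasDerivAt_quartic a₀ a₁ a₂ a₃ a₄ _))
    (hrel t)
end

section
/- On the canonically symplectic phase space ℝ⁴ with coordinates (u₁, u₂, p_{u₁}, p_{u₂}) and brackets {uᵢ, p_{uⱼ}} = δᵢⱼ, the functions a = p_{u₁}²/(u₁−u₂) + p_{u₂}²/(u₂−u₁) − u₁² − u₁u₂ − u₂² and b = u₂p_{u₁}²/(u₂−u₁) + u₁p_{u₂}²/(u₁−u₂) + (u₁+u₂)u₁u₂ satisfy {a, b} = 0 on the open set where u₁ ≠ u₂. -/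
/-!
The functions `a` and `b` are a Stäckel pair: on `{u₁ ≠ u₂}` they are determined by the
separation relations `uᵢ a + b = φᵢ := p_{uᵢ}² − uᵢ³` (`i = 1, 2`), whose right-hand
sides depend on separate canonical pairs. Differentiating the relations gives
`uᵢ da + db = dφᵢ − a duᵢ`, and pairing the two with the symplectic form `ω` yields
`(u₁ − u₂) {a, b} = ω(dφ₁ − a du₁, dφ₂ − a du₂) = 0`.
-/

open Filter Topology

/-- Canonical Poisson bracket on phase space ℝ⁴ with coordinates
(u₁, u₂, p₁, p₂):  {F,G} = Σᵢ (∂F/∂uᵢ ∂G/∂pᵢ − ∂F/∂pᵢ ∂G/∂uᵢ). -/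
noncomputable def pb (F G : ℝ × ℝ × ℝ × ℝ → ℝ) (z : ℝ × ℝ × ℝ × ℝ) : ℝ :=
  fderiv ℝ F z (1, 0, 0, 0) * fderiv ℝ G z (0, 0, 1, 0)
  - fderiv ℝ F z (0, 0, 1, 0) * fderiv ℝ G z (1, 0, 0, 0)
  + fderiv ℝ F z (0, 1, 0, 0) * fderiv ℝ G z (0, 0, 0, 1)
  - fderiv ℝ F z (0, 0, 0, 1) * fderiv ℝ G z (0, 1, 0, 0)

def symplecticPairing (L M : (ℝ × ℝ × ℝ × ℝ) →L[ℝ] ℝ) : ℝ :=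
  L (1, 0, 0, 0) * M (0, 0, 1, 0) - L (0, 0, 1, 0) * M (1, 0, 0, 0)
  + L (0, 1, 0, 0) * M (0, 0, 0, 1) - L (0, 0, 0, 1) * M (0, 1, 0, 0)

theorem pb_eq_symplecticPairing (F G : ℝ × ℝ × ℝ × ℝ → ℝ) (z : ℝ × ℝ × ℝ × ℝ) :
    pb F G z = symplecticPairing (fderiv ℝ F z) (fderiv ℝ G z) :=
  rfl

theorem symplecticPairing_smul_add (A B : (ℝ × ℝ × ℝ × ℝ) →L[ℝ] ℝ) (x y : ℝ) :
    symplecticPairing (x • A + B) (y • A + B) = (x - y) * symplecticPairing A B := by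
  simp only [symplecticPairing, add_apply, smul_apply, smul_eq_mul]
  ring

theorem symplecticPairing_eq_zero_of_separated {P Q : (ℝ × ℝ × ℝ × ℝ) →L[ℝ] ℝ}
    (hP₂ : P (0, 1, 0, 0) = 0) (hP₄ : P (0, 0, 0, 1) = 0)
    (hQ₁ : Q (1, 0, 0, 0) = 0) (hQ₃ : Q (0, 0, 1, 0) = 0) :
    symplecticPairing P Q = 0 := by
  simp [symplecticPairing, hP₂, hP₄, hQ₁, hQ₃]

theorem smul_fderiv_add_fderiv_eq_of_eventuallyEq
    {E : Type*} [NormedAddCommGroup E] [NormedSpace ℝ E] {F G : E → ℝ} {φ : ℝ × ℝ → ℝ} {z : E} (u : E →L[ℝ] ℝ) (π : E →L[ℝ] ℝ × ℝ)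
    (hF : DifferentiableAt ℝ F z) (hG : DifferentiableAt ℝ G z)
    (hφ : DifferentiableAt ℝ φ (π z))
    (hsep : (fun w => u w * F w + G w) =ᶠ[𝓝 z] fun w => φ (π w)) :
    u z • fderiv ℝ F z + fderiv ℝ G z = (fderiv ℝ φ (π z)).comp π - F z • u := by
  have hlhs := (u.hasFDerivAt.mul hF.hasFDerivAt).add hG.hasFDerivAt
  have hrhs := hφ.hasFDerivAt.comp z π.hasFDerivAt
  rw [← (hlhs.congr_of_eventuallyEq hsep.symm).unique hrhs]
  abel

open ContinuousLinearMap in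
theorem pb_eq_zero_of_stackel {F G : ℝ × ℝ × ℝ × ℝ → ℝ} {φ₁ φ₂ : ℝ × ℝ → ℝ}
    {z : ℝ × ℝ × ℝ × ℝ} (hz : z.1 ≠ z.2.1)
    (hF : DifferentiableAt ℝ F z) (hG : DifferentiableAt ℝ G z)
    (hφ₁ : DifferentiableAt ℝ φ₁ (z.1, z.2.2.1)) (hφ₂ : DifferentiableAt ℝ φ₂ (z.2.1, z.2.2.2))
    (hsep₁ : (fun w => w.1 * F w + G w) =ᶠ[𝓝 z] fun w => φ₁ (w.1, w.2.2.1))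
    (hsep₂ : (fun w => w.2.1 * F w + G w) =ᶠ[𝓝 z] fun w => φ₂ (w.2.1, w.2.2.2)) :
    pb F G z = 0 := by
  let u₁ : (ℝ × ℝ × ℝ × ℝ) →L[ℝ] ℝ := fst ℝ ℝ _
  let u₂ : (ℝ × ℝ × ℝ × ℝ) →L[ℝ] ℝ := (fst ℝ ℝ _).comp (snd ℝ ℝ _)
  let p₁ : (ℝ × ℝ × ℝ × ℝ) →L[ℝ] ℝ := (fst ℝ ℝ ℝ).comp ((snd ℝ ℝ _).comp (snd ℝ ℝ _))
  let p₂ : (ℝ × ℝ × ℝ × ℝ) →L[ℝ] ℝ := (snd ℝ ℝ ℝ).comp ((snd ℝ ℝ _).comp (snd ℝ ℝ _))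
  have h₁ : z.1 • fderiv ℝ F z + fderiv ℝ G z = _ :=
    smul_fderiv_add_fderiv_eq_of_eventuallyEq u₁ (u₁.prod p₁) hF hG hφ₁ hsep₁
  have h₂ : z.2.1 • fderiv ℝ F z + fderiv ℝ G z = _ :=
    smul_fderiv_add_fderiv_eq_of_eventuallyEq u₂ (u₂.prod p₂) hF hG hφ₂ hsep₂
  have hsub : z.1 - z.2.1 ≠ 0 := sub_ne_zero.mpr hz
  rw [pb_eq_symplecticPairing, ← mul_right_inj' hsub, mul_zero,
    ← symplecticPairing_smul_add, h₁, h₂]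
  apply symplecticPairing_eq_zero_of_separated <;> simp [u₁, u₂, p₁, p₂, Prod.mk_zero_zero]

/-- The functions a and b are in involution on {u₁ ≠ u₂}. -/
theorem stmt_1 :
    ∀ z : ℝ × ℝ × ℝ × ℝ, z.1 ≠ z.2.1 →
      pb (fun z => z.2.2.1 ^ 2 / (z.1 - z.2.1) + z.2.2.2 ^ 2 / (z.2.1 - z.1)
            - z.1 ^ 2 - z.1 * z.2.1 - z.2.1 ^ 2)
         (fun z => z.2.1 * z.2.2.1 ^ 2 / (z.2.1 - z.1)
            + z.1 * z.2.2.2 ^ 2 / (z.1 - z.2.1)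
            + (z.1 + z.2.1) * z.1 * z.2.1) z = 0 := by
  intro z hz
  have hd : z.1 - z.2.1 ≠ 0 := sub_ne_zero.mpr hz
  have hd' : z.2.1 - z.1 ≠ 0 := sub_ne_zero.mpr hz.symm
  have hne : ∀ᶠ w : ℝ × ℝ × ℝ × ℝ in 𝓝 z, w.1 ≠ w.2.1 :=
    isOpen_ne_fun continuous_fst (continuous_fst.comp continuous_snd) |>.mem_nhds hz
  refine pb_eq_zero_of_stackel (φ₁ := fun q => q.2 ^ 2 - q.1 ^ 3)
    (φ₂ := fun q => q.2 ^ 2 - q.1 ^ 3) hz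
    ?_ ?_ (by fun_prop) (by fun_prop) ?_ ?_
  · fun_prop (disch := assumption)
  · fun_prop (disch := assumption)
  all_goals
    filter_upwards [hne] with w hw
    have : w.1 - w.2.1 ≠ 0 := sub_ne_zero.mpr hw
    have : w.2.1 - w.1 ≠ 0 := sub_ne_zero.mpr hw.symm
    field_simp
    ring
end

section
/- With a, b as above, define x₃ = ((p_{u₁}−p_{u₂})/(u₁−u₂))² − (u₁+u₂) and y₃ = p_{u₁} + ((p_{u₁}−p_{u₂})/(u₁−u₂))(x₃ − u₁). Then {a, x₃} = 0 and {a, y₃} = 0 on the open set where u₁ ≠ u₂. -/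
noncomputable def aFun (z : ℝ × ℝ × ℝ × ℝ) : ℝ :=
  z.2.2.1 ^ 2 / (z.1 - z.2.1) + z.2.2.2 ^ 2 / (z.2.1 - z.1)
    - z.1 ^ 2 - z.1 * z.2.1 - z.2.1 ^ 2

noncomputable def x₃Fun (z : ℝ × ℝ × ℝ × ℝ) : ℝ :=
  ((z.2.2.1 - z.2.2.2) / (z.1 - z.2.1)) ^ 2 - (z.1 + z.2.1)

noncomputable def y₃Fun (z : ℝ × ℝ × ℝ × ℝ) : ℝ :=
  z.2.2.1 + ((z.2.2.1 - z.2.2.2) / (z.1 - z.2.1)) * (x₃Fun z - z.1)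

/-! The bracket `{a, G}` at `z` is the derivative of `G` in the direction of the Hamiltonian
vector `X = hamVec aFun z`, so it can be computed by one-variable calculus along the line
`t ↦ z + t • X`. Along `X` the chord slope `q = (p₁ - p₂) / (u₁ - u₂)` has derivative `-1`, while
`u₁` and `u₂` move with speeds `-2p₁ / (u₁ - u₂)` and `2p₂ / (u₁ - u₂)`. Hence `x₃ = q² - u₁ - u₂`
is constant to first order, and then so is `y₃ = p₁ + q (x₃ - u₁)`. -/

noncomputable def hamVec (F : ℝ × ℝ × ℝ × ℝ → ℝ) (z : ℝ × ℝ × ℝ × ℝ) : ℝ × ℝ × ℝ × ℝ :=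
  (-fderiv ℝ F z (0, 0, 1, 0), -fderiv ℝ F z (0, 0, 0, 1),
    fderiv ℝ F z (1, 0, 0, 0), fderiv ℝ F z (0, 1, 0, 0))

theorem pb_eq_fderiv_hamVec (F G : ℝ × ℝ × ℝ × ℝ → ℝ) (z : ℝ × ℝ × ℝ × ℝ) :
    pb F G z = fderiv ℝ G z (hamVec F z) := by
  have hv : hamVec F z = (-fderiv ℝ F z (0, 0, 1, 0)) • ((1, 0, 0, 0) : ℝ × ℝ × ℝ × ℝ)
      + (-fderiv ℝ F z (0, 0, 0, 1)) • (0, 1, 0, 0) + fderiv ℝ F z (1, 0, 0, 0) • (0, 0, 1, 0)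
      + fderiv ℝ F z (0, 1, 0, 0) • (0, 0, 0, 1) := by
    simp [hamVec]
  rw [hv, pb]
  simp only [map_add, map_smul, smul_eq_mul]
  ring

theorem fderiv_apply_eq_of_hasLineDerivAt {E F : Type*} [NormedAddCommGroup E] [NormedSpace ℝ E]
    [NormedAddCommGroup F] [NormedSpace ℝ F] {f : E → F} {x v : E} {f' : F}
    (hf : DifferentiableAt ℝ f x) (h : HasLineDerivAt ℝ f f' x v) : fderiv ℝ f x v = f' := by
  rw [← hf.lineDeriv_eq_fderiv, h.lineDeriv]

theorem pb_eq_of_hasLineDerivAt {F G : ℝ × ℝ × ℝ × ℝ → ℝ} {z : ℝ × ℝ × ℝ × ℝ} {c : ℝ}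
    (hG : DifferentiableAt ℝ G z) (h : HasLineDerivAt ℝ G c z (hamVec F z)) : pb F G z = c := by
  rw [pb_eq_fderiv_hamVec, fderiv_apply_eq_of_hasLineDerivAt hG h]

section Line

variable (z w : ℝ × ℝ × ℝ × ℝ)

theorem hasDerivAt_add_smul_fst : HasDerivAt (fun t : ℝ => (z + t • w).1) w.1 0 := by
  simpa using (hasDerivAt_mul_const w.1).const_add z.1

theorem hasDerivAt_add_smul_snd_fst : HasDerivAt (fun t : ℝ => (z + t • w).2.1) w.2.1 0 := by
  simpa using (hasDerivAt_mul_const w.2.1).const_add z.2.1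

theorem hasDerivAt_add_smul_snd_snd_fst :
    HasDerivAt (fun t : ℝ => (z + t • w).2.2.1) w.2.2.1 0 := by
  simpa using (hasDerivAt_mul_const w.2.2.1).const_add z.2.2.1

theorem hasDerivAt_add_smul_snd_snd_snd :
    HasDerivAt (fun t : ℝ => (z + t • w).2.2.2) w.2.2.2 0 := by
  simpa using (hasDerivAt_mul_const w.2.2.2).const_add z.2.2.2

end Line

section

variable {z : ℝ × ℝ × ℝ × ℝ}

theorem differentiableAt_aFun (hz : z.1 ≠ z.2.1) : DifferentiableAt ℝ aFun z := by
  have hd : z.1 - z.2.1 ≠ 0 := sub_ne_zero.2 hz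
  have hd' : z.2.1 - z.1 ≠ 0 := sub_ne_zero.2 hz.symm
  unfold aFun
  fun_prop (disch := assumption)

theorem differentiableAt_x₃Fun (hz : z.1 ≠ z.2.1) : DifferentiableAt ℝ x₃Fun z := by
  have hd : z.1 - z.2.1 ≠ 0 := sub_ne_zero.2 hz
  unfold x₃Fun
  fun_prop (disch := assumption)

theorem differentiableAt_y₃Fun (hz : z.1 ≠ z.2.1) : DifferentiableAt ℝ y₃Fun z := by
  have hd : z.1 - z.2.1 ≠ 0 := sub_ne_zero.2 hz
  unfold y₃Fun x₃Fun
  fun_prop (disch := assumption)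

theorem hasLineDerivAt_aFun (hz : z.1 ≠ z.2.1) (w : ℝ × ℝ × ℝ × ℝ) :
    HasLineDerivAt ℝ aFun
      (2 * (z.2.2.1 * w.2.2.1 - z.2.2.2 * w.2.2.2) / (z.1 - z.2.1)
        - (z.2.2.1 ^ 2 - z.2.2.2 ^ 2) * (w.1 - w.2.1) / (z.1 - z.2.1) ^ 2
        - (2 * z.1 + z.2.1) * w.1 - (z.1 + 2 * z.2.1) * w.2.1) z w := by
  have hd : z.1 - z.2.1 ≠ 0 := sub_ne_zero.2 hz
  have hd' : z.2.1 - z.1 ≠ 0 := sub_ne_zero.2 hz.symm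
  have h₁ := hasDerivAt_add_smul_fst z w
  have h₂ := hasDerivAt_add_smul_snd_fst z w
  have h₃ := hasDerivAt_add_smul_snd_snd_fst z w
  have h₄ := hasDerivAt_add_smul_snd_snd_snd z w
  have := (((((h₃.pow 2).div (h₁.sub h₂) (by simpa using hd)).add
    ((h₄.pow 2).div (h₂.sub h₁) (by simpa using hd'))).sub (h₁.pow 2)).sub (h₁.mul h₂)).sub
      (h₂.pow 2)
  refine this.congr_deriv ?_
  simp only [Pi.sub_apply, Pi.pow_apply, zero_smul, add_zero]
  field_simp
  ring

theorem hamVec_aFun (hz : z.1 ≠ z.2.1) :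
    hamVec aFun z = (-(2 * z.2.2.1 / (z.1 - z.2.1)), 2 * z.2.2.2 / (z.1 - z.2.1),
      -(z.2.2.1 ^ 2 - z.2.2.2 ^ 2) / (z.1 - z.2.1) ^ 2 - 2 * z.1 - z.2.1,
      (z.2.2.1 ^ 2 - z.2.2.2 ^ 2) / (z.1 - z.2.1) ^ 2 - z.1 - 2 * z.2.1) := by
  have hd : z.1 - z.2.1 ≠ 0 := sub_ne_zero.2 hz
  have hfd (w : ℝ × ℝ × ℝ × ℝ) :=
    fderiv_apply_eq_of_hasLineDerivAt (differentiableAt_aFun hz) (hasLineDerivAt_aFun hz w)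
  simp only [hamVec, hfd]
  refine Prod.ext ?_ (Prod.ext ?_ (Prod.ext ?_ ?_)) <;> (field_simp; ring)

noncomputable def chordSlope (z : ℝ × ℝ × ℝ × ℝ) : ℝ := (z.2.2.1 - z.2.2.2) / (z.1 - z.2.1)

theorem hasLineDerivAt_chordSlope (hz : z.1 ≠ z.2.1) (w : ℝ × ℝ × ℝ × ℝ) :
    HasLineDerivAt ℝ chordSlope
      ((w.2.2.1 - w.2.2.2 - chordSlope z * (w.1 - w.2.1)) / (z.1 - z.2.1)) z w := by
  have hd : z.1 - z.2.1 ≠ 0 := sub_ne_zero.2 hz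
  have := ((hasDerivAt_add_smul_snd_snd_fst z w).sub (hasDerivAt_add_smul_snd_snd_snd z w)).div
    ((hasDerivAt_add_smul_fst z w).sub (hasDerivAt_add_smul_snd_fst z w)) (by simpa using hd)
  refine this.congr_deriv ?_
  simp only [Pi.sub_apply, zero_smul, add_zero, chordSlope]
  field_simp

theorem hasLineDerivAt_chordSlope_hamVec_aFun (hz : z.1 ≠ z.2.1) :
    HasLineDerivAt ℝ chordSlope (-1) z (hamVec aFun z) := by
  have hd : z.1 - z.2.1 ≠ 0 := sub_ne_zero.2 hz
  refine HasDerivAt.congr_deriv (hasLineDerivAt_chordSlope hz _) ?_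
  rw [hamVec_aFun hz, chordSlope]
  field_simp
  ring

theorem hasLineDerivAt_x₃Fun_hamVec_aFun (hz : z.1 ≠ z.2.1) :
    HasLineDerivAt ℝ x₃Fun 0 z (hamVec aFun z) := by
  have hd : z.1 - z.2.1 ≠ 0 := sub_ne_zero.2 hz
  have hq : HasDerivAt (fun t : ℝ => chordSlope (z + t • hamVec aFun z)) (-1) 0 :=
    hasLineDerivAt_chordSlope_hamVec_aFun hz
  refine ((hq.pow 2).sub ((hasDerivAt_add_smul_fst z _).add
    (hasDerivAt_add_smul_snd_fst z _))).congr_deriv ?_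
  rw [hamVec_aFun hz]
  simp only [zero_smul, add_zero, chordSlope, Nat.cast_ofNat, Nat.reduceSub, pow_one]
  field_simp
  ring

theorem hasLineDerivAt_y₃Fun_hamVec_aFun (hz : z.1 ≠ z.2.1) :
    HasLineDerivAt ℝ y₃Fun 0 z (hamVec aFun z) := by
  have hd : z.1 - z.2.1 ≠ 0 := sub_ne_zero.2 hz
  have hq : HasDerivAt (fun t : ℝ => chordSlope (z + t • hamVec aFun z)) (-1) 0 :=
    hasLineDerivAt_chordSlope_hamVec_aFun hz
  have hx : HasDerivAt (fun t : ℝ => x₃Fun (z + t • hamVec aFun z)) 0 0 :=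
    hasLineDerivAt_x₃Fun_hamVec_aFun hz
  refine ((hasDerivAt_add_smul_snd_snd_fst z _).add
    (hq.mul (hx.sub (hasDerivAt_add_smul_fst z _)))).congr_deriv ?_
  rw [hamVec_aFun hz]
  simp only [Pi.sub_apply, zero_smul, add_zero, chordSlope, x₃Fun]
  field_simp
  ring

end

/-- {a, x₃} = 0 and {a, y₃} = 0 on {u₁ ≠ u₂}. -/
theorem stmt_2 :
    ∀ z : ℝ × ℝ × ℝ × ℝ, z.1 ≠ z.2.1 →
      pb aFun x₃Fun z = 0 ∧ pb aFun y₃Fun z = 0 := by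
  intro z hz
  exact ⟨pb_eq_of_hasLineDerivAt (differentiableAt_x₃Fun hz) (hasLineDerivAt_x₃Fun_hamVec_aFun hz),
    pb_eq_of_hasLineDerivAt (differentiableAt_y₃Fun hz) (hasLineDerivAt_y₃Fun_hamVec_aFun hz)⟩
end

section
/- With a, b, x₃, y₃ defined as above on {u₁ ≠ u₂} ⊂ ℝ⁴, the syzygy y₃² = x₃³ + a·x₃ + b holds identically. -/
/-- The syzygy `y₃² = x₃³ + a·x₃ + b` holds identically on `{u₁ ≠ u₂}`. -/
theorem stmt_4 (u₁ u₂ p₁ p₂ : ℝ) (h : u₁ ≠ u₂) :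
    let a := p₁ ^ 2 / (u₁ - u₂) + p₂ ^ 2 / (u₂ - u₁) - u₁ ^ 2 - u₁ * u₂ - u₂ ^ 2
    let b := u₂ * p₁ ^ 2 / (u₂ - u₁) + u₁ * p₂ ^ 2 / (u₁ - u₂) + (u₁ + u₂) * u₁ * u₂
    let x₃ := ((p₁ - p₂) / (u₁ - u₂)) ^ 2 - (u₁ + u₂)
    let y₃ := p₁ + ((p₁ - p₂) / (u₁ - u₂)) * (x₃ - u₁)
    y₃ ^ 2 = x₃ ^ 3 + a * x₃ + b := by
  have h1 : u₁ - u₂ ≠ 0 := sub_ne_zero.mpr h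
  have h2 : u₂ - u₁ ≠ 0 := sub_ne_zero.mpr (Ne.symm h)
  simp only
  field_simp
  ring
end

section
/- For integers k₁, k₂ ≥ 1, on {u₁ ≠ u₂} ⊂ ℝ⁴ with canonical Poisson bracket, the functions A = (p_{u₁}/k₁)²/(u₁−u₂) + (p_{u₂}/k₂)²/(u₂−u₁) − u₁² − u₁u₂ − u₂² and B = u₂(p_{u₁}/k₁)²/(u₂−u₁) + u₁(p_{u₂}/k₂)²/(u₁−u₂) + (u₁+u₂)u₁u₂ are in involution: {A, B} = 0. -/
/-!
Put `D = u₁ - u₂` and `qᵢ = pᵢ / kᵢ`. The momentum derivatives of `B` are those of `A`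
multiplied by `-u₂` and `-u₁` respectively, so
`{A, B} = -∂A/∂p₁ (u₂ ∂A/∂u₁ + ∂B/∂u₁) - ∂A/∂p₂ (u₁ ∂A/∂u₂ + ∂B/∂u₂)`,
and both brackets vanish identically once the derivatives are written out.
-/

section QuotientRule

variable {𝕜 E : Type*} [NontriviallyNormedField 𝕜] [NormedAddCommGroup E] [NormedSpace 𝕜 E]
  {c d : E → 𝕜} {c' d' : E →L[𝕜] 𝕜} {x : E}

theorem HasFDerivAt.div_const (hc : HasFDerivAt c c' x) (a : 𝕜) :
    HasFDerivAt (fun y => c y / a) (a⁻¹ • c') x := by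
  simpa only [div_eq_mul_inv, smul_eq_mul, mul_comm] using hc.mul_const a⁻¹

theorem HasFDerivAt.div (hc : HasFDerivAt c c' x) (hd : HasFDerivAt d d' x) (hx : d x ≠ 0) :
    HasFDerivAt (fun y => c y / d y) ((d x ^ 2)⁻¹ • (d x • c' - c x • d')) x := by
  simp_rw [div_eq_mul_inv]
  refine (hc.mul ((hasDerivAt_inv hx).comp_hasFDerivAt x hd)).congr_fderiv ?_
  ext v
  simp only [add_apply, sub_apply, smul_apply, Function.comp_apply, smul_eq_mul]
  field_simp
  ring

end QuotientRule

noncomputable def hamA (α β : ℝ) (z : ℝ × ℝ × ℝ × ℝ) : ℝ :=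
  (z.2.2.1 / α) ^ 2 / (z.1 - z.2.1) + (z.2.2.2 / β) ^ 2 / (z.2.1 - z.1)
    - z.1 ^ 2 - z.1 * z.2.1 - z.2.1 ^ 2

noncomputable def hamB (α β : ℝ) (z : ℝ × ℝ × ℝ × ℝ) : ℝ :=
  z.2.1 * (z.2.2.1 / α) ^ 2 / (z.2.1 - z.1) + z.1 * (z.2.2.2 / β) ^ 2 / (z.1 - z.2.1)
    + (z.1 + z.2.1) * z.1 * z.2.1

section Derivatives

variable {α β u₁ u₂ p₁ p₂ : ℝ}

theorem fderiv_hamA_apply (h : u₁ ≠ u₂) (v : ℝ × ℝ × ℝ × ℝ) :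
    fderiv ℝ (hamA α β) (u₁, u₂, p₁, p₂) v =
      2 * ((p₁ / α) * (v.2.2.1 / α) - (p₂ / β) * (v.2.2.2 / β)) / (u₁ - u₂)
        - ((p₁ / α) ^ 2 - (p₂ / β) ^ 2) * (v.1 - v.2.1) / (u₁ - u₂) ^ 2
        - (2 * u₁ + u₂) * v.1 - (u₁ + 2 * u₂) * v.2.1 := by
  have hD : u₁ - u₂ ≠ 0 := sub_ne_zero.2 h
  have hD' : u₂ - u₁ ≠ 0 := sub_ne_zero.2 h.symm
  set z : ℝ × ℝ × ℝ × ℝ := (u₁, u₂, p₁, p₂)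
  have hu₁ : HasFDerivAt (𝕜 := ℝ) (fun z : ℝ × ℝ × ℝ × ℝ => z.1) _ z := hasFDerivAt_fst
  have hu₂ : HasFDerivAt (𝕜 := ℝ) (fun z : ℝ × ℝ × ℝ × ℝ => z.2.1) _ z := hasFDerivAt_snd.fst
  have hp₁ : HasFDerivAt (𝕜 := ℝ) (fun z : ℝ × ℝ × ℝ × ℝ => z.2.2.1) _ z :=
    hasFDerivAt_snd.snd.fst
  have hp₂ : HasFDerivAt (𝕜 := ℝ) (fun z : ℝ × ℝ × ℝ × ℝ => z.2.2.2) _ z :=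
    hasFDerivAt_snd.snd.snd
  have hA := (((((hp₁.div_const α).pow 2).div (hu₁.sub hu₂) hD).add
    (((hp₂.div_const β).pow 2).div (hu₂.sub hu₁) hD')).sub
    (hu₁.pow 2)).sub (hu₁.mul hu₂) |>.sub (hu₂.pow 2)
  rw [(show HasFDerivAt (hamA α β) _ z from hA).fderiv]
  simp only [z, Pi.sub_apply, Nat.add_one_sub_one, pow_one, nsmul_eq_mul, Nat.cast_ofNat,
    add_apply, sub_apply, smul_apply, ContinuousLinearMap.comp_apply,
    ContinuousLinearMap.coe_fst', ContinuousLinearMap.coe_snd', smul_eq_mul]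
  field_simp
  ring

theorem fderiv_hamB_apply (h : u₁ ≠ u₂) (v : ℝ × ℝ × ℝ × ℝ) :
    fderiv ℝ (hamB α β) (u₁, u₂, p₁, p₂) v =
      (2 * (u₁ * (p₂ / β) * (v.2.2.2 / β) - u₂ * (p₁ / α) * (v.2.2.1 / α))
          + (p₂ / β) ^ 2 * v.1 - (p₁ / α) ^ 2 * v.2.1) / (u₁ - u₂)
        - (u₁ * (p₂ / β) ^ 2 - u₂ * (p₁ / α) ^ 2) * (v.1 - v.2.1) / (u₁ - u₂) ^ 2
        + (2 * u₁ + u₂) * u₂ * v.1 + (u₁ + 2 * u₂) * u₁ * v.2.1 := by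
  have hD : u₁ - u₂ ≠ 0 := sub_ne_zero.2 h
  have hD' : u₂ - u₁ ≠ 0 := sub_ne_zero.2 h.symm
  set z : ℝ × ℝ × ℝ × ℝ := (u₁, u₂, p₁, p₂)
  have hu₁ : HasFDerivAt (𝕜 := ℝ) (fun z : ℝ × ℝ × ℝ × ℝ => z.1) _ z := hasFDerivAt_fst
  have hu₂ : HasFDerivAt (𝕜 := ℝ) (fun z : ℝ × ℝ × ℝ × ℝ => z.2.1) _ z := hasFDerivAt_snd.fst
  have hp₁ : HasFDerivAt (𝕜 := ℝ) (fun z : ℝ × ℝ × ℝ × ℝ => z.2.2.1) _ z :=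
    hasFDerivAt_snd.snd.fst
  have hp₂ : HasFDerivAt (𝕜 := ℝ) (fun z : ℝ × ℝ × ℝ × ℝ => z.2.2.2) _ z :=
    hasFDerivAt_snd.snd.snd
  have hB := (((hu₂.mul ((hp₁.div_const α).pow 2)).div (hu₂.sub hu₁) hD').add
    ((hu₁.mul ((hp₂.div_const β).pow 2)).div (hu₁.sub hu₂) hD)).add
    (((hu₁.add hu₂).mul hu₁).mul hu₂)
  rw [(show HasFDerivAt (hamB α β) _ z from hB).fderiv]
  simp only [z, Pi.add_apply, Pi.sub_apply, Pi.mul_apply, Nat.add_one_sub_one, pow_one,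
    nsmul_eq_mul, Nat.cast_ofNat, smul_add, add_apply, sub_apply, smul_apply,
    ContinuousLinearMap.comp_apply, ContinuousLinearMap.coe_fst', ContinuousLinearMap.coe_snd',
    smul_eq_mul]
  field_simp
  ring

theorem pb_hamA_hamB (h : u₁ ≠ u₂) : pb (hamA α β) (hamB α β) (u₁, u₂, p₁, p₂) = 0 := by
  simp only [pb, fderiv_hamA_apply h, fderiv_hamB_apply h]
  have hD : u₁ - u₂ ≠ 0 := sub_ne_zero.2 h
  field_simp
  ring

end Derivatives

theorem stmt_6_general (k₁ k₂ : ℤ) :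
    ∀ z : ℝ × ℝ × ℝ × ℝ, z.1 ≠ z.2.1 →
      pb (fun z => (z.2.2.1 / (k₁ : ℝ)) ^ 2 / (z.1 - z.2.1)
            + (z.2.2.2 / (k₂ : ℝ)) ^ 2 / (z.2.1 - z.1)
            - z.1 ^ 2 - z.1 * z.2.1 - z.2.1 ^ 2)
         (fun z => z.2.1 * (z.2.2.1 / (k₁ : ℝ)) ^ 2 / (z.2.1 - z.1)
            + z.1 * (z.2.2.2 / (k₂ : ℝ)) ^ 2 / (z.1 - z.2.1)
            + (z.1 + z.2.1) * z.1 * z.2.1) z = 0 := by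
  rintro ⟨u₁, u₂, p₁, p₂⟩ h
  exact pb_hamA_hamB h

/-- For positive integers k₁, k₂ the deformed functions A, B are in
involution on {u₁ ≠ u₂}. -/
theorem stmt_6 (k₁ k₂ : ℤ) (hk₁ : 1 ≤ k₁) (hk₂ : 1 ≤ k₂) :
    ∀ z : ℝ × ℝ × ℝ × ℝ, z.1 ≠ z.2.1 →
      pb (fun z => (z.2.2.1 / (k₁ : ℝ)) ^ 2 / (z.1 - z.2.1)
            + (z.2.2.2 / (k₂ : ℝ)) ^ 2 / (z.2.1 - z.1)
            - z.1 ^ 2 - z.1 * z.2.1 - z.2.1 ^ 2)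
         (fun z => z.2.1 * (z.2.2.1 / (k₁ : ℝ)) ^ 2 / (z.2.1 - z.1)
            + z.1 * (z.2.2.2 / (k₂ : ℝ)) ^ 2 / (z.1 - z.2.1)
            + (z.1 + z.2.1) * z.1 * z.2.1) z = 0 :=
  stmt_6_general k₁ k₂
end

section
/- Let f(x) = a₄x⁴ + a₃x³ + a₂x² + a₁x + a₀ over a field with a₄ a square, √a₄ a fixed square root. Given (x₁,y₁), (x₂,y₂) on y² = f(x) with x₁ ≠ x₂, define P(x) = √a₄(x−x₁)(x−x₂) + (x−x₂)y₁/(x₁−x₂) + (x−x₁)y₂/(x₂−x₁), b₂, b₁, b₀ its coefficients, and x₃ = −x₁ − x₂ − (2b₀b₂ + b₁² − a₂)/(2b₁b₂ − a₃), y₃ = −P(x₃) (assuming 2b₁b₂ ≠ a₃). Then y₃² = f(x₃), i.e. the Euler addition formula produces a point on the quartic curve. -/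
/-!
For `P(x) = b₂x² + b₁x + b₀` with `b₂² = a₄`, the difference `P(x)² - f(x)` is a cubic, and it
vanishes at `x₁` and `x₂` because `P` interpolates the two points. Its leading coefficient is
`2b₁b₂ - a₃`, so by Vieta its third root is `x₃`; hence `P(x₃)² = f(x₃)`, and `y₃ = -P(x₃)` has
the same square.
-/

theorem cubic_eq_zero_of_vieta {K : Type*} [Field K] {c d e g x₁ x₂ x₃ : K}
    (hc : c ≠ 0) (hne : x₁ ≠ x₂) (hx₃ : x₃ = -x₁ - x₂ - d / c)
    (h₁ : c * x₁ ^ 3 + d * x₁ ^ 2 + e * x₁ + g = 0)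
    (h₂ : c * x₂ ^ 3 + d * x₂ ^ 2 + e * x₂ + g = 0) :
    c * x₃ ^ 3 + d * x₃ ^ 2 + e * x₃ + g = 0 := by
  have hsum : c * (x₁ + x₂ + x₃) = -d := by
    rw [hx₃]
    field_simp
    ring
  have key : (x₁ - x₂) * (c * x₃ ^ 3 + d * x₃ ^ 2 + e * x₃ + g) = 0 := by
    linear_combination (x₃ - x₂) * h₁ - (x₃ - x₁) * h₂
      + (x₁ - x₂) * (x₃ - x₁) * (x₃ - x₂) * hsum
  exact (mul_eq_zero.mp key).resolve_left (sub_ne_zero.mpr hne)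

theorem leading_coeff_eq_of_forall_quadratic_eq {K : Type*} [Field K] [NeZero (2 : K)]
    {a b c a' b' c' : K} (h : ∀ x, a * x ^ 2 + b * x + c = a' * x ^ 2 + b' * x + c') :
    a = a' := by
  have h2 : (2 : K) * a = 2 * a' := by
    linear_combination h 1 + h (-1) - 2 * h 0
  exact mul_left_cancel₀ two_ne_zero h2

theorem quartic_third_intersection {K : Type*} [Field K]
    {a₀ a₁ a₂ a₃ s b₁ b₀ x₁ x₂ x₃ : K} (hne : x₁ ≠ x₂) (hden : 2 * b₁ * s ≠ a₃)
    (hx₃ : x₃ = -x₁ - x₂ - (2 * b₀ * s + b₁ ^ 2 - a₂) / (2 * b₁ * s - a₃))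
    (h₁ : (s * x₁ ^ 2 + b₁ * x₁ + b₀) ^ 2
      = s ^ 2 * x₁ ^ 4 + a₃ * x₁ ^ 3 + a₂ * x₁ ^ 2 + a₁ * x₁ + a₀)
    (h₂ : (s * x₂ ^ 2 + b₁ * x₂ + b₀) ^ 2
      = s ^ 2 * x₂ ^ 4 + a₃ * x₂ ^ 3 + a₂ * x₂ ^ 2 + a₁ * x₂ + a₀) :
    (s * x₃ ^ 2 + b₁ * x₃ + b₀) ^ 2
      = s ^ 2 * x₃ ^ 4 + a₃ * x₃ ^ 3 + a₂ * x₃ ^ 2 + a₁ * x₃ + a₀ := by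
  have h₃ := cubic_eq_zero_of_vieta (e := 2 * b₀ * b₁ - a₁) (g := b₀ ^ 2 - a₀)
    (sub_ne_zero.mpr hden) hne hx₃ (by linear_combination h₁) (by linear_combination h₂)
  linear_combination h₃

/-- Euler's addition formula on the quartic curve `y² = f(x)` produces a point
on the curve. -/
theorem stmt_9 {K : Type*} [Field K] [CharZero K]
    (a₀ a₁ a₂ a₃ a₄ s : K) (hs : s ^ 2 = a₄)
    (x₁ y₁ x₂ y₂ b₂ b₁ b₀ : K)
    (h₁ : y₁ ^ 2 = a₄ * x₁ ^ 4 + a₃ * x₁ ^ 3 + a₂ * x₁ ^ 2 + a₁ * x₁ + a₀)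
    (h₂ : y₂ ^ 2 = a₄ * x₂ ^ 4 + a₃ * x₂ ^ 3 + a₂ * x₂ ^ 2 + a₁ * x₂ + a₀)
    (hne : x₁ ≠ x₂)
    (hP : ∀ x : K,
      s * (x - x₁) * (x - x₂) + (x - x₂) * y₁ / (x₁ - x₂)
        + (x - x₁) * y₂ / (x₂ - x₁) = b₂ * x ^ 2 + b₁ * x + b₀)
    (hden : 2 * b₁ * b₂ ≠ a₃) :
    let x₃ := -x₁ - x₂ - (2 * b₀ * b₂ + b₁ ^ 2 - a₂) / (2 * b₁ * b₂ - a₃)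
    let y₃ := -(b₂ * x₃ ^ 2 + b₁ * x₃ + b₀)
    y₃ ^ 2 = a₄ * x₃ ^ 4 + a₃ * x₃ ^ 3 + a₂ * x₃ ^ 2 + a₁ * x₃ + a₀ := by
  intro x₃ y₃
  have hd : x₁ - x₂ ≠ 0 := sub_ne_zero.mpr hne
  have hd' : x₂ - x₁ ≠ 0 := sub_ne_zero.mpr hne.symm
  have hb₂ : s = b₂ := leading_coeff_eq_of_forall_quadratic_eq
    (b := y₁ / (x₁ - x₂) + y₂ / (x₂ - x₁) - s * (x₁ + x₂))
    (c := s * x₁ * x₂ - x₂ * y₁ / (x₁ - x₂) - x₁ * y₂ / (x₂ - x₁))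
    fun x => by rw [← hP x]; ring
  have e₁ : y₁ = b₂ * x₁ ^ 2 + b₁ * x₁ + b₀ := by simpa [hd] using hP x₁
  have e₂ : y₂ = b₂ * x₂ ^ 2 + b₁ * x₂ + b₀ := by simpa [hd'] using hP x₂
  subst hb₂ hs e₁ e₂
  have h₃ := quartic_third_intersection hne hden rfl h₁ h₂
  simp only [y₃, neg_sq]
  exact h₃
end

section
/- On {α₁ < u₁ < α₂ < u₂ < α₃} with φ(z) = (z−α₁)(z−α₂)(z−α₃) and canonical Poisson bracket, the geodesic Hamiltonian 2H = I₁ = φ(u₁)p_{u₁}²/(u₁−u₂) + φ(u₂)p_{u₂}²/(u₂−u₁) Poisson-commutes with I₂ = u₂φ(u₁)p_{u₁}²/(u₂−u₁) + u₁φ(u₂)p_{u₂}²/(u₁−u₂). -/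
theorem pb_const_mul_right (F G : ℝ × ℝ × ℝ × ℝ → ℝ) (c : ℝ) (z : ℝ × ℝ × ℝ × ℝ) :
    pb F (fun z => c * G z) z = c * pb F G z := by
  have hcG : (fun z => c * G z) = c • G := rfl
  simp only [pb, hcG, fderiv_const_smul_field, Pi.smul_apply, FunLike.coe_smul, smul_eq_mul]
  ring

noncomputable section

def stackelH (h₁ h₂ : ℝ × ℝ → ℝ) (z : ℝ × ℝ × ℝ × ℝ) : ℝ :=
  (h₁ (z.1, z.2.2.1) - h₂ (z.2.1, z.2.2.2)) / (z.1 - z.2.1)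

def stackelK (h₁ h₂ : ℝ × ℝ → ℝ) (z : ℝ × ℝ × ℝ × ℝ) : ℝ :=
  (z.2.1 * h₁ (z.1, z.2.2.1) - z.1 * h₂ (z.2.1, z.2.2.2)) / (z.1 - z.2.1)

end

theorem pb_stackelH_stackelK_eq_zero {h₁ h₂ : ℝ × ℝ → ℝ} {z : ℝ × ℝ × ℝ × ℝ}
    (hh₁ : DifferentiableAt ℝ h₁ (z.1, z.2.2.1)) (hh₂ : DifferentiableAt ℝ h₂ (z.2.1, z.2.2.2))
    (hz : z.1 ≠ z.2.1) : pb (stackelH h₁ h₂) (stackelK h₁ h₂) z = 0 := by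
  have hu₁ : HasFDerivAt (fun z : ℝ × ℝ × ℝ × ℝ => z.1) _ z := hasFDerivAt_fst (𝕜 := ℝ)
  have hu₂ : HasFDerivAt (fun z : ℝ × ℝ × ℝ × ℝ => z.2.1) _ z :=
    (hasFDerivAt_fst (𝕜 := ℝ)).comp z hasFDerivAt_snd
  have hp₁ : HasFDerivAt (fun z : ℝ × ℝ × ℝ × ℝ => z.2.2.1) _ z :=
    (hasFDerivAt_fst (𝕜 := ℝ)).comp z (hasFDerivAt_snd.comp z hasFDerivAt_snd)
  have hp₂ : HasFDerivAt (fun z : ℝ × ℝ × ℝ × ℝ => z.2.2.2) _ z :=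
    (hasFDerivAt_snd (𝕜 := ℝ)).comp z (hasFDerivAt_snd.comp z hasFDerivAt_snd)
  have e₁ := hh₁.hasFDerivAt.comp z (hu₁.prodMk hp₁)
  have e₂ := hh₂.hasFDerivAt.comp z (hu₂.prodMk hp₂)
  have hinv := (hasDerivAt_inv (sub_ne_zero.mpr hz)).comp_hasFDerivAt z (hu₁.sub hu₂)
  have hH : HasFDerivAt (stackelH h₁ h₂) _ z := (e₁.sub e₂).mul hinv
  have hK : HasFDerivAt (stackelK h₁ h₂) _ z := ((hu₂.mul e₁).sub (hu₁.mul e₂)).mul hinv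
  rw [pb, hH.fderiv, hK.fderiv]
  simp only [Pi.sub_apply, Function.comp_apply, neg_smul, smul_neg, Prod.mk_zero_zero, add_apply,
    neg_apply, smul_apply, sub_apply, ContinuousLinearMap.coe_fst', ContinuousLinearMap.comp_apply,
    ContinuousLinearMap.coe_snd', sub_zero, smul_eq_mul, mul_one, ContinuousLinearMap.prod_apply,
    map_zero, Pi.mul_apply, sub_self, mul_zero, neg_zero, add_zero, zero_add, zero_sub, mul_neg,
    neg_neg, neg_mul, sub_neg_eq_add]
  field_simp
  ring

theorem stmt_13_general (α₁ α₂ α₃ : ℝ) :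
    ∀ z : ℝ × ℝ × ℝ × ℝ, α₁ < z.1 → z.1 < α₂ → α₂ < z.2.1 → z.2.1 < α₃ →
      pb (fun z => ((z.1 - α₁) * (z.1 - α₂) * (z.1 - α₃) * z.2.2.1 ^ 2
              / (z.1 - z.2.1)
            + (z.2.1 - α₁) * (z.2.1 - α₂) * (z.2.1 - α₃) * z.2.2.2 ^ 2
              / (z.2.1 - z.1)) / 2)
         (fun z => z.2.1 * (z.1 - α₁) * (z.1 - α₂) * (z.1 - α₃) * z.2.2.1 ^ 2
              / (z.2.1 - z.1)
            + z.1 * (z.2.1 - α₁) * (z.2.1 - α₂) * (z.2.1 - α₃) * z.2.2.2 ^ 2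
              / (z.1 - z.2.1)) z = 0 := by
  intro z _ hz₁ hz₂ _
  let h : ℝ × ℝ → ℝ := fun x => (x.1 - α₁) * (x.1 - α₂) * (x.1 - α₃) * x.2 ^ 2 / 2
  have key := congrArg ((-2) * ·)
    (pb_stackelH_stackelK_eq_zero (h₁ := h) (h₂ := h) (by fun_prop) (by fun_prop)
      (hz₁.trans hz₂).ne)
  rw [mul_zero, ← pb_const_mul_right] at key
  convert key using 2 <;> funext w <;>
    simp only [stackelH, stackelK, h, ← neg_sub w.1 w.2.1, div_neg] <;> ring

/-- The geodesic Hamiltonian on the sphere in elliptic coordinates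
Poisson-commutes with the second integral I₂. -/
theorem stmt_13 (α₁ α₂ α₃ : ℝ) (h12 : α₁ < α₂) (h23 : α₂ < α₃) :
    ∀ z : ℝ × ℝ × ℝ × ℝ, α₁ < z.1 → z.1 < α₂ → α₂ < z.2.1 → z.2.1 < α₃ →
      pb (fun z => ((z.1 - α₁) * (z.1 - α₂) * (z.1 - α₃) * z.2.2.1 ^ 2
              / (z.1 - z.2.1)
            + (z.2.1 - α₁) * (z.2.1 - α₂) * (z.2.1 - α₃) * z.2.2.2 ^ 2
              / (z.2.1 - z.1)) / 2)
         (fun z => z.2.1 * (z.1 - α₁) * (z.1 - α₂) * (z.1 - α₃) * z.2.2.1 ^ 2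
              / (z.2.1 - z.1)
            + z.1 * (z.2.1 - α₁) * (z.2.1 - α₂) * (z.2.1 - α₃) * z.2.2.2 ^ 2
              / (z.1 - z.2.1)) z = 0 :=
  stmt_13_general α₁ α₂ α₃
end

section
/- For arbitrary smooth potentials V₁(u₁), V₂(u₂) and nonzero constants k₁, k₂, the functions I₁ = [(u₁²−κ²)((p_{u₁}/k₁)² + V₁(u₁))]/(u₁²−u₂²) + [(u₂²−κ²)((p_{u₂}/k₂)² + V₂(u₂))]/(u₂²−u₁²) and I₂ = −u₂²(u₁²−κ²)((p_{u₁}/k₁)² + V₁(u₁))/(u₁²−u₂²) − u₁²(u₂²−κ²)((p_{u₂}/k₂)² + V₂(u₂))/(u₂²−u₁²) are in involution with respect to the canonical Poisson bracket: {I₁, I₂} = 0. -/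
set_option maxHeartbeats 4000000 in
/-- For arbitrary smooth potentials and nonzero constants k₁, k₂ the Stäckel
integrals I₁, I₂ are in involution. -/
theorem stmt_15 (κ k₁ k₂ : ℝ) (hκ : 0 < κ) (hk₁ : k₁ ≠ 0) (hk₂ : k₂ ≠ 0)
    (V₁ V₂ : ℝ → ℝ) (hV₁ : ContDiff ℝ (⊤ : ℕ∞) V₁) (hV₂ : ContDiff ℝ (⊤ : ℕ∞) V₂) :
    ∀ z : ℝ × ℝ × ℝ × ℝ, z.1 ^ 2 ≠ z.2.1 ^ 2 →
      pb (fun z => (z.1 ^ 2 - κ ^ 2) * ((z.2.2.1 / k₁) ^ 2 + V₁ z.1)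
              / (z.1 ^ 2 - z.2.1 ^ 2)
            + (z.2.1 ^ 2 - κ ^ 2) * ((z.2.2.2 / k₂) ^ 2 + V₂ z.2.1)
              / (z.2.1 ^ 2 - z.1 ^ 2))
         (fun z => -(z.2.1 ^ 2 * (z.1 ^ 2 - κ ^ 2)
              * ((z.2.2.1 / k₁) ^ 2 + V₁ z.1) / (z.1 ^ 2 - z.2.1 ^ 2))
            - z.1 ^ 2 * (z.2.1 ^ 2 - κ ^ 2)
              * ((z.2.2.2 / k₂) ^ 2 + V₂ z.2.1) / (z.2.1 ^ 2 - z.1 ^ 2)) z = 0 := by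
  intro z hz
  have hD : z.1 ^ 2 - z.2.1 ^ 2 ≠ 0 := sub_ne_zero.mpr hz
  have hD' : z.2.1 ^ 2 - z.1 ^ 2 ≠ 0 := sub_ne_zero.mpr (Ne.symm hz)
  set e1 : ℝ × ℝ × ℝ × ℝ →L[ℝ] ℝ := ContinuousLinearMap.fst ℝ ℝ (ℝ × ℝ × ℝ) with he1
  set e2 : ℝ × ℝ × ℝ × ℝ →L[ℝ] ℝ :=
    (ContinuousLinearMap.fst ℝ ℝ (ℝ × ℝ)).comp (ContinuousLinearMap.snd ℝ ℝ (ℝ × ℝ × ℝ)) with he2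
  set e3 : ℝ × ℝ × ℝ × ℝ →L[ℝ] ℝ :=
    ((ContinuousLinearMap.fst ℝ ℝ ℝ).comp (ContinuousLinearMap.snd ℝ ℝ (ℝ × ℝ))).comp
      (ContinuousLinearMap.snd ℝ ℝ (ℝ × ℝ × ℝ)) with he3
  set e4 : ℝ × ℝ × ℝ × ℝ →L[ℝ] ℝ :=
    ((ContinuousLinearMap.snd ℝ ℝ ℝ).comp (ContinuousLinearMap.snd ℝ ℝ (ℝ × ℝ))).comp
      (ContinuousLinearMap.snd ℝ ℝ (ℝ × ℝ × ℝ)) with he4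
  have h1 : HasFDerivAt (fun z : ℝ × ℝ × ℝ × ℝ => z.1) e1 z := hasFDerivAt_fst
  have h2 : HasFDerivAt (fun z : ℝ × ℝ × ℝ × ℝ => z.2.1) e2 z :=
    hasFDerivAt_fst.comp z hasFDerivAt_snd
  have h3 : HasFDerivAt (fun z : ℝ × ℝ × ℝ × ℝ => z.2.2.1) e3 z :=
    (hasFDerivAt_fst.comp z.2 hasFDerivAt_snd).comp z hasFDerivAt_snd
  have h4 : HasFDerivAt (fun z : ℝ × ℝ × ℝ × ℝ => z.2.2.2) e4 z :=
    (hasFDerivAt_snd.comp z.2 hasFDerivAt_snd).comp z hasFDerivAt_snd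
  have hdV1 : HasFDerivAt (fun z : ℝ × ℝ × ℝ × ℝ => V₁ z.1) ((deriv V₁ z.1) • e1) z :=
    ((hV₁.differentiable (by simp) z.1).hasDerivAt).comp_hasFDerivAt z h1
  have hdV2 : HasFDerivAt (fun z : ℝ × ℝ × ℝ × ℝ => V₂ z.2.1) ((deriv V₂ z.2.1) • e2) z :=
    ((hV₂.differentiable (by simp) z.2.1).hasDerivAt).comp_hasFDerivAt z h2
  have sq : ∀ (f : ℝ × ℝ × ℝ × ℝ → ℝ) (L : ℝ × ℝ × ℝ × ℝ →L[ℝ] ℝ), HasFDerivAt f L z →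
      HasFDerivAt (fun w => f w ^ 2) ((2 * f z) • L) z := fun f L h => by
    simpa [pow_two, two_mul, add_smul, Pi.mul_def] using h.mul h
  have h1s := sq _ _ h1
  have h2s := sq _ _ h2
  have h3d : HasFDerivAt (fun z : ℝ × ℝ × ℝ × ℝ => z.2.2.1 / k₁) (k₁⁻¹ • e3) z := by
    simpa [div_eq_mul_inv, smul_smul, mul_comm] using h3.mul_const k₁⁻¹
  have h4d : HasFDerivAt (fun z : ℝ × ℝ × ℝ × ℝ => z.2.2.2 / k₂) (k₂⁻¹ • e4) z := by
    simpa [div_eq_mul_inv, smul_smul, mul_comm] using h4.mul_const k₂⁻¹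
  have h3s := sq _ _ h3d
  have h4s := sq _ _ h4d
  have hg1 := h1s.sub_const (κ ^ 2)
  have hg2 := h2s.sub_const (κ ^ 2)
  have ha := h3s.add hdV1
  have hb := h4s.add hdV2
  have hDd := h1s.sub h2s
  have hDd' := h2s.sub h1s
  have hdiv : ∀ (f g : ℝ × ℝ × ℝ × ℝ → ℝ) (Lf Lg : ℝ × ℝ × ℝ × ℝ →L[ℝ] ℝ),
      HasFDerivAt f Lf z → HasFDerivAt g Lg z → g z ≠ 0 →
      HasFDerivAt (fun w => f w / g w)
        ((g z)⁻¹ • Lf + -((f z * ((g z) ^ 2)⁻¹) • Lg)) z := by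
    intro f g Lf Lg hf hg h0
    have hi : HasFDerivAt (fun w => (g w)⁻¹) ((-((g z) ^ 2)⁻¹) • Lg) z :=
      (hasDerivAt_inv h0).comp_hasFDerivAt z hg
    have := hf.mul hi
    simp only [smul_smul] at this
    simpa [div_eq_mul_inv, add_comm, neg_smul, Pi.mul_def] using this
  have hI1 := (hdiv _ _ _ _ (hg1.mul ha) hDd hD).add (hdiv _ _ _ _ (hg2.mul hb) hDd' hD')
  have hI2 := (hdiv _ _ _ _ ((h2s.mul hg1).mul ha) hDd hD).neg.sub
      (hdiv _ _ _ _ ((h1s.mul hg2).mul hb) hDd' hD')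
  simp only [Pi.add_def, Pi.sub_def, Pi.neg_def, Pi.mul_def] at hI1 hI2
  rw [pb, hI1.fderiv, hI2.fderiv]
  simp only [ContinuousLinearMap.add_apply, ContinuousLinearMap.sub_apply,
    ContinuousLinearMap.smul_apply, ContinuousLinearMap.neg_apply,
    ContinuousLinearMap.comp_apply, ContinuousLinearMap.coe_fst', ContinuousLinearMap.coe_snd',
    he1, he2, he3, he4, smul_eq_mul]
  field_simp
  ring
end

section
/- Let f(x) = a₄x⁴ + a₃x³ + a₂x² + a₁x + a₀ and (x₁, y₁) a point with y₁² = f(x₁), y₁ ≠ 0. Define P(x) = √a₄(x−x₁)² + (x−x₁)f'(x₁)/(2y₁) + y₁ (with √a₄ a fixed square root of a₄), write P(x) = b₂x² + b₁x + b₀, and set [2]x₁ = −2x₁ − (2b₀b₂ + b₁² − a₂)/(2b₁b₂ − a₃), [2]y₁ = −P([2]x₁), assuming 2b₁b₂ ≠ a₃. Then ([2]x₁)² and [2]y₁ satisfy ([2]y₁)² = f([2]x₁), i.e. Euler's doubling formula yields a point on the quartic curve. -/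
set_option maxHeartbeats 1000000

/-- Euler's doubling formula on the quartic curve y² = f(x) yields a point on
the curve. -/
theorem stmt_19 {K : Type*} [Field K] [CharZero K]
    (a₀ a₁ a₂ a₃ a₄ s : K) (hs : s ^ 2 = a₄)
    (x₁ y₁ b₂ b₁ b₀ : K)
    (h₁ : y₁ ^ 2 = a₄ * x₁ ^ 4 + a₃ * x₁ ^ 3 + a₂ * x₁ ^ 2 + a₁ * x₁ + a₀)
    (hy : y₁ ≠ 0)
    (hP : ∀ x : K,
      s * (x - x₁) ^ 2
        + (x - x₁) * (4 * a₄ * x₁ ^ 3 + 3 * a₃ * x₁ ^ 2 + 2 * a₂ * x₁ + a₁)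
          / (2 * y₁)
        + y₁ = b₂ * x ^ 2 + b₁ * x + b₀)
    (hden : 2 * b₁ * b₂ ≠ a₃) :
    let dx₁ := -2 * x₁ - (2 * b₀ * b₂ + b₁ ^ 2 - a₂) / (2 * b₁ * b₂ - a₃)
    let dy₁ := -(b₂ * dx₁ ^ 2 + b₁ * dx₁ + b₀)
    dy₁ ^ 2 = a₄ * dx₁ ^ 4 + a₃ * dx₁ ^ 3 + a₂ * dx₁ ^ 2 + a₁ * dx₁ + a₀ := by
  intro dx₁ dy₁
  have hdx : dx₁ = -2 * x₁ - (2 * b₀ * b₂ + b₁ ^ 2 - a₂) / (2 * b₁ * b₂ - a₃) :=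
    rfl
  have hdy : dy₁ = -(b₂ * dx₁ ^ 2 + b₁ * dx₁ + b₀) := rfl
  clear_value dx₁ dy₁
  have hy2 : (2 : K) * y₁ ≠ 0 := mul_ne_zero two_ne_zero hy
  have h0 := hP x₁
  have hp := hP (x₁ + 1)
  have hm := hP (x₁ - 1)
  have hb₂ : b₂ = s := by linear_combination (2 * h0 - hp - hm) / 2
  have key : (4 * a₄ * x₁ ^ 3 + 3 * a₃ * x₁ ^ 2 + 2 * a₂ * x₁ + a₁) / (2 * y₁)
      = 2 * s * x₁ + b₁ := by
    linear_combination (hp - hm) / 2 + 2 * x₁ * hb₂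
  rw [div_eq_iff hy2] at key
  have hb₀ : b₀ = y₁ - s * x₁ ^ 2 - b₁ * x₁ := by
    linear_combination -h0 - x₁ ^ 2 * hb₂
  have ha₁ : a₁ = (2 * s * x₁ + b₁) * (2 * y₁)
      - (4 * a₄ * x₁ ^ 3 + 3 * a₃ * x₁ ^ 2 + 2 * a₂ * x₁) := by
    linear_combination key
  have ha₀ : a₀ = y₁ ^ 2
      - (a₄ * x₁ ^ 4 + a₃ * x₁ ^ 3 + a₂ * x₁ ^ 2 + a₁ * x₁) := by
    linear_combination -h₁
  have hb₂s : s = b₂ := hb₂.symm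
  have ha₄ : a₄ = s ^ 2 := hs.symm
  subst ha₀ ha₁ hb₀ ha₄ hb₂s
  have hden' : 2 * b₁ * s - a₃ ≠ 0 := sub_ne_zero.mpr hden
  -- the third root relation: D * dx₁ + 2 x₁ D + N = 0
  have hzero : (2 * b₁ * s - a₃) * dx₁ + 2 * x₁ * (2 * b₁ * s - a₃)
      + (2 * (y₁ - s * x₁ ^ 2 - b₁ * x₁) * s + b₁ ^ 2 - a₂) = 0 := by
    rw [hdx]
    field_simp
    ring
  -- cubic factorization with a double root at x₁
  have hfact : (s * dx₁ ^ 2 + b₁ * dx₁ + (y₁ - s * x₁ ^ 2 - b₁ * x₁)) ^ 2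
      - (s ^ 2 * dx₁ ^ 4 + a₃ * dx₁ ^ 3 + a₂ * dx₁ ^ 2
        + ((2 * s * x₁ + b₁) * (2 * y₁)
            - (4 * s ^ 2 * x₁ ^ 3 + 3 * a₃ * x₁ ^ 2 + 2 * a₂ * x₁)) * dx₁
        + (y₁ ^ 2 - (s ^ 2 * x₁ ^ 4 + a₃ * x₁ ^ 3 + a₂ * x₁ ^ 2
            + ((2 * s * x₁ + b₁) * (2 * y₁)
              - (4 * s ^ 2 * x₁ ^ 3 + 3 * a₃ * x₁ ^ 2 + 2 * a₂ * x₁)) * x₁)))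
      = (dx₁ - x₁) ^ 2 * ((2 * b₁ * s - a₃) * dx₁ + 2 * x₁ * (2 * b₁ * s - a₃)
        + (2 * (y₁ - s * x₁ ^ 2 - b₁ * x₁) * s + b₁ ^ 2 - a₂)) := by
    ring
  rw [hdy]
  linear_combination hfact + (dx₁ - x₁) ^ 2 * hzero
end
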